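/- arXiv:1005.1588 — 4 statements merged into one kernel-verified Lean document; each statement's English description precedes it below -/
import Mathlib

section
/- Let H be a real Hilbert space and let a be a continuous symmetric positive semidefinite bilinear form on H. Let K₁ ⊆ K₂ be closed subspaces of H and let w ∈ H. Define V(φ) := (1/2) a(φ,φ) + a(w,φ). Suppose ψ₁ ∈ K₁ satisfies V(ψ₁) ≤ V(φ) for all φ ∈ K₁, and ψ₂ ∈ K₂ satisfies V(ψ₂) ≤ V(φ) for all φ ∈ K₂. Then a(w + ψ₂, w + ψ₂) ≤ a(w + ψ₁, w + ψ₁). -/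
/-- Comparison of energies of minimizers of
`V(φ) = (1/2) a(φ,φ) + a(w,φ)` over nested closed subspaces `K₁ ⊆ K₂`. -/
theorem stmt_2 {H : Type*} [NormedAddCommGroup H] [InnerProductSpace ℝ H] [CompleteSpace H]
    (a : H →ₗ[ℝ] H →ₗ[ℝ] ℝ)
    (ha_cont : ∃ M : ℝ, 0 ≤ M ∧ ∀ u v : H, |a u v| ≤ M * ‖u‖ * ‖v‖)
    (ha_symm : ∀ u v : H, a u v = a v u)
    (ha_pos : ∀ v : H, 0 ≤ a v v)
    (K₁ K₂ : Submodule ℝ H)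
    (hK₁ : IsClosed (K₁ : Set H)) (hK₂ : IsClosed (K₂ : Set H))
    (hsub : K₁ ≤ K₂) (w : H)
    (ψ₁ ψ₂ : H) (hψ₁ : ψ₁ ∈ K₁) (hψ₂ : ψ₂ ∈ K₂)
    (hmin₁ : ∀ φ ∈ K₁, (1 / 2) * a ψ₁ ψ₁ + a w ψ₁ ≤ (1 / 2) * a φ φ + a w φ)
    (hmin₂ : ∀ φ ∈ K₂, (1 / 2) * a ψ₂ ψ₂ + a w ψ₂ ≤ (1 / 2) * a φ φ + a w φ) :
    a (w + ψ₂) (w + ψ₂) ≤ a (w + ψ₁) (w + ψ₁) := by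
  have h := hmin₂ ψ₁ (hsub hψ₁)
  have e1 : a (w + ψ₁) (w + ψ₁) = a w w + 2 * a w ψ₁ + a ψ₁ ψ₁ := by
    simp [map_add, LinearMap.add_apply, ha_symm ψ₁ w]; ring
  have e2 : a (w + ψ₂) (w + ψ₂) = a w w + 2 * a w ψ₂ + a ψ₂ ψ₂ := by
    simp [map_add, LinearMap.add_apply, ha_symm ψ₂ w]; ring
  linarith
end

section
/- Let H be a real Hilbert space, let s_D be a continuous symmetric bilinear form on H that is coercive with constant C > 0, let s be a continuous symmetric positive semidefinite bilinear form on H, and let l be a continuous linear functional on H. Suppose u ∈ H is the unique element satisfying s(u,v) = l(v) for all v ∈ H. For each ε > 0 let u_ε ∈ H satisfy ε s_D(u_ε,v) + s(u_ε,v) = l(v) for all v ∈ H. Then u_ε converges strongly to u in H as ε → 0⁺. -/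
/-- Cauchy–Schwarz for a positive semidefinite symmetric bilinear form. -/
lemma bilin_cauchy_schwarz {H : Type*} [AddCommGroup H] [Module ℝ H]
    (b : H →ₗ[ℝ] H →ₗ[ℝ] ℝ) (hsymm : ∀ u v : H, b u v = b v u)
    (hpos : ∀ v : H, 0 ≤ b v v) (u v : H) : (b u v) ^ 2 ≤ b u u * b v v := by
  have h : ∀ t : ℝ, 0 ≤ b v v * (t * t) + (2 * b u v) * t + b u u := by
    intro t
    have h0 := hpos (u + t • v)
    simp only [map_add, map_smul, LinearMap.add_apply, LinearMap.smul_apply,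
      smul_eq_mul] at h0
    rw [← hsymm u v] at h0
    nlinarith [h0]
  have hd := discrim_le_zero h
  rw [discrim] at hd
  nlinarith [hd]



/-- Convergence of the Tikhonov-regularized solutions `u_ε` to the exact
solution `u` of the unregularized optimality condition as `ε → 0⁺`. -/
theorem stmt_5 {H : Type*} [NormedAddCommGroup H] [InnerProductSpace ℝ H] [CompleteSpace H]
    (sD s : H →ₗ[ℝ] H →ₗ[ℝ] ℝ) (C : ℝ) (hC : 0 < C)
    (hsD_cont : ∃ M : ℝ, 0 ≤ M ∧ ∀ u v : H, |sD u v| ≤ M * ‖u‖ * ‖v‖)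
    (hsD_symm : ∀ u v : H, sD u v = sD v u)
    (hsD_coer : ∀ v : H, C * ‖v‖ ^ 2 ≤ sD v v)
    (hs_cont : ∃ M : ℝ, 0 ≤ M ∧ ∀ u v : H, |s u v| ≤ M * ‖u‖ * ‖v‖)
    (hs_symm : ∀ u v : H, s u v = s v u)
    (hs_pos : ∀ v : H, 0 ≤ s v v)
    (l : H →L[ℝ] ℝ) (u : H)
    (hu : ∀ v : H, s u v = l v)
    (hu_uniq : ∀ u' : H, (∀ v : H, s u' v = l v) → u' = u)
    (uε : ℝ → H)
    (huε : ∀ ε : ℝ, 0 < ε → ∀ v : H, ε * sD (uε ε) v + s (uε ε) v = l v) :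
    Filter.Tendsto uε (nhdsWithin 0 (Set.Ioi 0)) (nhds u) := by
  obtain ⟨MD, hMD0, hMD⟩ := hsD_cont
  have hsD_pos : ∀ v : H, 0 ≤ sD v v := fun v => le_trans (by positivity) (hsD_coer v)
  set q : ℝ → ℝ := fun ε => sD (uε ε) (uε ε) with hqdef
  -- Step A: q ε ≤ sD u u
  have hA : ∀ ε : ℝ, 0 < ε → q ε ≤ sD u u := by
    intro ε hε
    set a := uε ε with ha
    have key : ε * sD a (a - u) = -(s (a - u) (a - u)) := by
      have h1 := huε ε hε (a - u)
      have h2 := hu (a - u)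
      have : s (a - u) (a - u) = s a (a - u) - s u (a - u) := by
        simp only [map_sub, LinearMap.sub_apply]; ring
      linarith
    have h3 : sD a (a - u) ≤ 0 := by
      have := hs_pos (a - u)
      nlinarith [key]
    have h4 : sD a a ≤ sD a u := by
      have : sD a (a - u) = sD a a - sD a u := by simp [map_sub]
      linarith
    have hcs := bilin_cauchy_schwarz sD hsD_symm hsD_pos a u
    have h5 := hsD_pos a
    have h6 := hsD_pos u
    nlinarith [hcs, h4, h5, h6]
  -- Step B: Cauchy estimate
  have hB : ∀ ε ε' : ℝ, 0 < ε → ε < ε' →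
      sD (uε ε - uε ε') (uε ε - uε ε') ≤ q ε - q ε' := by
    intro ε ε' hε hεε'
    set a := uε ε with ha
    set b := uε ε' with hb
    set d := a - b with hd
    have e1 := huε ε hε d
    have e2 := huε ε' (hε.trans hεε') d
    have hsdd : s b d - s a d = -(s d d) := by
      have : s d d = s a d - s b d := by
        rw [hd]; simp only [map_sub, LinearMap.sub_apply]; ring
      linarith
    have h1 : ε * sD a d - ε' * sD b d = -(s d d) := by linarith
    have had : sD a d = sD b d + sD d d := by
      have hba : a = b + d := by rw [hd]; abel
      conv_lhs => rw [hba]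
      simp only [map_add, LinearMap.add_apply]
    have hbd : 0 ≤ sD b d := by
      have hsd := hs_pos d
      have hdd := hsD_pos d
      nlinarith [h1, had]
    have hab : sD b b ≤ sD a b := by
      have hba : a = b + d := by rw [hd]; abel
      have h7 : sD b a = sD b b + sD b d := by conv_lhs => rw [hba, map_add]
      have h8 := hsD_symm a b
      linarith
    have : sD d d ≤ sD a d := by linarith
    have haad : sD a d = sD a a - sD a b := by conv_lhs => rw [hd, map_sub]
    calc sD d d ≤ sD a d := this
      _ = sD a a - sD a b := haad
      _ ≤ sD a a - sD b b := by linarith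
      _ = q ε - q ε' := rfl
  have hBnorm : ∀ ε ε' : ℝ, 0 < ε → ε < ε' →
      C * ‖uε ε - uε ε'‖ ^ 2 ≤ q ε - q ε' := by
    intro ε ε' hε h
    exact le_trans (hsD_coer _) (hB ε ε' hε h)
  -- monotonicity
  have hmono : ∀ ε ε' : ℝ, 0 < ε → ε ≤ ε' → q ε' ≤ q ε := by
    intro ε ε' hε h
    rcases eq_or_lt_of_le h with rfl | h
    · exact le_refl _
    · have := hB ε ε' hε h
      have := hsD_pos (uε ε - uε ε')
      linarith
  -- supremum
  set S := q '' Set.Ioi 0 with hS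
  have hSne : S.Nonempty := ⟨q 1, ⟨1, by norm_num, rfl⟩⟩
  have hSbdd : BddAbove S := by
    refine ⟨sD u u, ?_⟩
    rintro x ⟨ε, hε, rfl⟩
    exact hA ε hε
  set L := sSup S with hL
  -- Cauchy of the image filter
  have hcauchy : Cauchy (Filter.map uε (nhdsWithin 0 (Set.Ioi 0))) := by
    rw [Metric.cauchy_iff]
    constructor
    · exact Filter.map_neBot
    · intro r hr
      have hδ : 0 < C * r ^ 2 / 2 := by positivity
      obtain ⟨x, hxS, hxgt⟩ := Real.add_neg_lt_sSup hSne (by linarith : -(C * r ^ 2 / 2) < 0)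
      obtain ⟨ε0, hε0, rfl⟩ := hxS
      refine ⟨uε '' Set.Ioc 0 ε0, ?_, ?_⟩
      · rw [Filter.mem_map]
        exact Filter.mem_of_superset (Ioc_mem_nhdsGT_of_mem ⟨le_refl 0, hε0⟩)
          (Set.subset_preimage_image _ _)
      · rintro x ⟨ε1, hε1, rfl⟩ y ⟨ε2, hε2, rfl⟩
        have key : ∀ a b : ℝ, a ∈ Set.Ioc (0:ℝ) ε0 → b ∈ Set.Ioc (0:ℝ) ε0 → a < b →
            dist (uε a) (uε b) < r := by
          intro a b hab hbb hlt
          have h1 : C * ‖uε a - uε b‖ ^ 2 ≤ q a - q b := hBnorm a b hab.1 hlt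
          have h2 : q b ≥ q ε0 := hmono b ε0 hbb.1 hbb.2
          have h3 : q a ≤ L := le_csSup hSbdd ⟨a, hab.1, rfl⟩
          have h4 : L + -(C * r ^ 2 / 2) < q ε0 := hxgt
          have h5 : C * ‖uε a - uε b‖ ^ 2 < C * r ^ 2 / 2 := by linarith
          have h6 : ‖uε a - uε b‖ ^ 2 < r ^ 2 := by nlinarith
          rw [dist_eq_norm]
          nlinarith [norm_nonneg (uε a - uε b), hr]
        rcases lt_trichotomy ε1 ε2 with h | h | h
        · exact key ε1 ε2 hε1 hε2 h
        · subst h; simpa using hr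
        · rw [dist_comm]; exact key ε2 ε1 hε2 hε1 h
  obtain ⟨w, hw⟩ := CompleteSpace.complete hcauchy
  have hwt : Filter.Tendsto uε (nhdsWithin 0 (Set.Ioi 0)) (nhds w) := hw
  -- bound on ‖uε ε‖
  have hbound : ∀ ε : ℝ, 0 < ε → ‖uε ε‖ ≤ Real.sqrt (sD u u / C) := by
    intro ε hε
    have h1 := hsD_coer (uε ε)
    have h2 := hA ε hε
    have h3 : ‖uε ε‖ ^ 2 ≤ sD u u / C := by
      rw [le_div_iff₀ hC]; nlinarith
    calc ‖uε ε‖ = Real.sqrt (‖uε ε‖ ^ 2) := by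
          rw [Real.sqrt_sq (norm_nonneg _)]
      _ ≤ Real.sqrt (sD u u / C) := Real.sqrt_le_sqrt h3
  -- identify w = u
  have hwu : w = u := by
    refine hu_uniq w fun v => ?_
    obtain ⟨Ms, hMs0, hMs⟩ := hs_cont
    have hcont : Continuous fun x : H => s x v := by
      have : Continuous fun x : H => s.flip v x :=
        AddMonoidHomClass.continuous_of_bound (s.flip v) (Ms * ‖v‖) fun x => by
          calc ‖s.flip v x‖ = |s x v| := rfl
            _ ≤ Ms * ‖x‖ * ‖v‖ := hMs x v
            _ = Ms * ‖v‖ * ‖x‖ := by ring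
      simpa [LinearMap.flip_apply] using this
    have t1 : Filter.Tendsto (fun ε => s (uε ε) v) (nhdsWithin 0 (Set.Ioi 0))
        (nhds (s w v)) := (hcont.tendsto w).comp hwt
    have t2 : Filter.Tendsto (fun ε => ε * sD (uε ε) v) (nhdsWithin 0 (Set.Ioi 0))
        (nhds 0) := by
      have hid : Filter.Tendsto (fun ε : ℝ => ε) (nhdsWithin 0 (Set.Ioi 0)) (nhds 0) :=
        Filter.tendsto_id.mono_left nhdsWithin_le_nhds
      have hK : Filter.Tendsto (fun ε : ℝ => ε * (MD * Real.sqrt (sD u u / C) * ‖v‖))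
          (nhdsWithin 0 (Set.Ioi 0)) (nhds 0) := by
        simpa using hid.mul_const (MD * Real.sqrt (sD u u / C) * ‖v‖)
      refine squeeze_zero_norm' ?_ hK
      filter_upwards [self_mem_nhdsWithin] with ε (hε : ε ∈ Set.Ioi 0)
      rw [Real.norm_eq_abs, abs_mul, abs_of_pos hε]
      calc ε * |sD (uε ε) v| ≤ ε * (MD * ‖uε ε‖ * ‖v‖) := by
            apply mul_le_mul_of_nonneg_left (hMD _ _) (le_of_lt hε)
        _ ≤ ε * (MD * Real.sqrt (sD u u / C) * ‖v‖) := by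
            apply mul_le_mul_of_nonneg_left _ (le_of_lt hε)
            have h9 := hbound ε hε
            have h10 := norm_nonneg v
            nlinarith [mul_le_mul_of_nonneg_left h9 hMD0,
              mul_le_mul_of_nonneg_right (mul_le_mul_of_nonneg_left h9 hMD0) h10]
        _ = ε * (MD * Real.sqrt (sD u u / C) * ‖v‖) := rfl
    have t3 : Filter.Tendsto (fun ε => ε * sD (uε ε) v + s (uε ε) v)
        (nhdsWithin 0 (Set.Ioi 0)) (nhds (0 + s w v)) := t2.add t1
    have t4 : Filter.Tendsto (fun _ : ℝ => (l v : ℝ)) (nhdsWithin 0 (Set.Ioi 0))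
        (nhds (l v)) := tendsto_const_nhds
    have heq : (fun ε => ε * sD (uε ε) v + s (uε ε) v) =ᶠ[nhdsWithin 0 (Set.Ioi 0)]
        fun _ => (l v : ℝ) := by
      filter_upwards [self_mem_nhdsWithin] with ε (hε : ε ∈ Set.Ioi 0)
      exact huε ε hε v
    have := tendsto_nhds_unique (t3.congr' heq) t4
    rw [zero_add] at this
    linarith [this]
  rwa [hwu] at hwt
end

section
/- Let H be a real Hilbert space, let s_D be a continuous symmetric bilinear form on H that is coercive with constant C > 0, let s be a continuous symmetric positive semidefinite bilinear form on H, let l be a continuous linear functional on H, and let ε > 0. Suppose u ∈ H satisfies s(u,v) = l(v) for all v ∈ H, and u_ε ∈ H satisfies ε s_D(u_ε,v) + s(u_ε,v) = l(v) for all v ∈ H. Then s_D(u_ε, u_ε) ≤ s_D(u_ε, u), and consequently s_D(u_ε − u, u_ε − u) ≤ s_D(u,u) − s_D(u_ε,u_ε) and s_D(u_ε, u_ε) ≤ s_D(u,u). -/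
/-- Intermediate inequalities comparing the regularized solution `u_ε` with
the exact solution `u`: `s_D(u_ε,u_ε) ≤ s_D(u_ε,u)`, hence
`s_D(u_ε−u,u_ε−u) ≤ s_D(u,u) − s_D(u_ε,u_ε)` and `s_D(u_ε,u_ε) ≤ s_D(u,u)`. -/
theorem stmt_6 {H : Type*} [NormedAddCommGroup H] [InnerProductSpace ℝ H] [CompleteSpace H]
    (sD s : H →ₗ[ℝ] H →ₗ[ℝ] ℝ) (C ε : ℝ) (hC : 0 < C) (hε : 0 < ε)
    (hsD_cont : ∃ M : ℝ, 0 ≤ M ∧ ∀ u v : H, |sD u v| ≤ M * ‖u‖ * ‖v‖)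
    (hsD_symm : ∀ u v : H, sD u v = sD v u)
    (hsD_coer : ∀ v : H, C * ‖v‖ ^ 2 ≤ sD v v)
    (hs_cont : ∃ M : ℝ, 0 ≤ M ∧ ∀ u v : H, |s u v| ≤ M * ‖u‖ * ‖v‖)
    (hs_symm : ∀ u v : H, s u v = s v u)
    (hs_pos : ∀ v : H, 0 ≤ s v v)
    (l : H →L[ℝ] ℝ) (u uε : H)
    (hu : ∀ v : H, s u v = l v)
    (huε : ∀ v : H, ε * sD uε v + s uε v = l v) :
    sD uε uε ≤ sD uε u ∧
      sD (uε - u) (uε - u) ≤ sD u u - sD uε uε ∧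
      sD uε uε ≤ sD u u := by
  have key : ε * sD uε (uε - u) = - s (uε - u) (uε - u) := by
    have h1 := huε (uε - u)
    have h2 := hu (uε - u)
    have : s (uε - u) (uε - u) = s uε (uε - u) - s u (uε - u) := by
      simp [map_sub]
      linarith [hs_symm u uε]
    linarith
  have h0 : sD uε (uε - u) ≤ 0 := by
    nlinarith [hs_pos (uε - u), hε]
  have h1 : sD uε uε ≤ sD uε u := by
    have : sD uε (uε - u) = sD uε uε - sD uε u := by simp [map_sub]
    linarith
  have hexp : sD (uε - u) (uε - u) = sD uε uε - 2 * sD uε u + sD u u := by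
    have := hsD_symm u uε
    simp [map_sub]
    linarith
  have hnn : 0 ≤ sD (uε - u) (uε - u) := by
    have := hsD_coer (uε - u)
    nlinarith [sq_nonneg ‖uε - u‖]
  exact ⟨h1, by linarith, by linarith⟩
end

section
/- Let H and U be real vector spaces, let a be a symmetric bilinear form on H, let D, N : U → H be linear maps, and let d, n ∈ H. Assume the orthogonality relations a(d, N v) = 0 and a(n, N v) = 0 for all v ∈ U, and the symmetry relations a(N u, N v) = a(N u, D v) = a(D u, N v) for all u, v ∈ U. Define s_D(u,v) := a(D u, D v), s_N(u,v) := a(N u, N v), l(v) := −a(d − n, D v), c := (1/2) a(d − n, d − n), and F(u,v) := (1/2) a((D u + d) − (N u + n), (D v + d) − (N v + n)). Then for all u, v ∈ U, F(u,v) = (1/2)(s_D(u,v) − s_N(u,v) − l(u) − l(v)) + c. -/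
/-- Expansion of the bilinear functional
`F(u,v) = (1/2) a((D u + d) − (N u + n), (D v + d) − (N v + n))` as
`(1/2)(s_D(u,v) − s_N(u,v) − l(u) − l(v)) + c`, given the Green's-formula
orthogonality and symmetry relations. -/
theorem stmt_7 {H U : Type*} [AddCommGroup H] [Module ℝ H] [AddCommGroup U] [Module ℝ U]
    (a : H →ₗ[ℝ] H →ₗ[ℝ] ℝ)
    (ha_symm : ∀ x y : H, a x y = a y x)
    (D N : U →ₗ[ℝ] H) (d n : H)
    (horth_d : ∀ v : U, a d (N v) = 0)
    (horth_n : ∀ v : U, a n (N v) = 0)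
    (hsym₁ : ∀ u v : U, a (N u) (N v) = a (N u) (D v))
    (hsym₂ : ∀ u v : U, a (N u) (D v) = a (D u) (N v)) :
    ∀ u v : U,
      (1 / 2) * a ((D u + d) - (N u + n)) ((D v + d) - (N v + n)) =
        (1 / 2) * (a (D u) (D v) - a (N u) (N v)
            - (-(a (d - n) (D u))) - (-(a (d - n) (D v))))
          + (1 / 2) * a (d - n) (d - n) := by
  intro u v
  simp only [map_add, map_sub, LinearMap.add_apply, LinearMap.sub_apply]
  have h1 := horth_d v
  have h2 := horth_n v
  have h3 := horth_d u
  have h4 := horth_n u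
  have h5 := hsym₁ u v
  have h6 := hsym₂ u v
  have h7 := hsym₁ v u
  have h8 := hsym₂ v u
  have h9 := ha_symm (N u) (d)
  have h10 := ha_symm (N u) (n)
  have h11 := ha_symm (D u) (d)
  have h12 := ha_symm (D u) (n)
  have h13 := ha_symm (D u) (D v)
  have h14 := ha_symm (N u) (N v)
  have h15 := ha_symm (N u) (D v)
  have h16 := ha_symm (d) (D v)
  have h17 := ha_symm (n) (D v)
  have h18 := ha_symm (d) n
  linarith
end
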